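/- For odd n ≥ 1, (b/a)·j_{n-1}·j_{n+1} − j_n² = −2^{n-1}, where (j_n) is the bi-periodic Jacobsthal sequence. -/

import Mathlib

/-!
Writing `x, y, z` for `j (2k), j (2k+1), j (2k+2)`, the division-free quantity
`b x z - a y²` gets multiplied by `4` when `k` increases by one: expanding the next two
recurrence steps leaves `2 b z (z - a y) - 4 a y²`, and `z - a y = 2 x`.
Starting from `-a` at `k = 0`, it equals `-a 2^(2k)`; dividing by `a` gives the claim.
-/

noncomputable def jj (a b : ℝ) : ℕ → ℝ
  | 0 => 0
  | 1 => 1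
  | n + 2 => (if Even (n + 2) then a else b) * jj a b (n + 1) + 2 * jj a b n

theorem jj_two_mul_add_two (a b : ℝ) (k : ℕ) :
    jj a b (2 * k + 2) = a * jj a b (2 * k + 1) + 2 * jj a b (2 * k) := by
  simp [jj, Nat.even_add]

theorem jj_two_mul_add_three (a b : ℝ) (k : ℕ) :
    jj a b (2 * k + 3) = b * jj a b (2 * k + 2) + 2 * jj a b (2 * k + 1) := by
  simp [jj, Nat.even_add, parity_simps]

theorem jj_cassini (a b : ℝ) (k : ℕ) :
    b * jj a b (2 * k) * jj a b (2 * k + 2) - a * jj a b (2 * k + 1) ^ 2 = -(a * 2 ^ (2 * k)) := by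
  induction k with
  | zero => simp [jj]
  | succ k ih =>
    rw [jj_two_mul_add_two a b (k + 1), show 2 * (k + 1) + 1 = 2 * k + 3 by ring,
      show 2 * (k + 1) = 2 * k + 2 by ring, jj_two_mul_add_three, jj_two_mul_add_two]
    rw [jj_two_mul_add_two] at ih
    linear_combination 4 * ih

theorem stmt18_general (a b : ℝ) (ha : a ≠ 0) (n : ℕ) (ho : Odd n) :
    (b / a) * jj a b (n - 1) * jj a b (n + 1) - jj a b n ^ 2 = -(2 ^ (n - 1)) := by
  obtain ⟨k, rfl⟩ := ho
  rw [Nat.add_sub_cancel, show 2 * k + 1 + 1 = 2 * k + 2 by ring]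
  field_simp
  linear_combination jj_cassini a b k

theorem stmt18 (a b : ℝ) (ha : a ≠ 0) (hb : b ≠ 0) (n : ℕ) (ho : Odd n) :
    (b / a) * jj a b (n - 1) * jj a b (n + 1) - jj a b n ^ 2 = -(2 ^ (n - 1)) :=
  stmt18_general a b ha n ho
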